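/- Let $n \geq 1$, let $u_1, \dots, u_n$ be Borel probability measures on $\mathbb{R}$ with finite second moments, and let $(\lambda_1, \dots, \lambda_n) \in \Sigma_n$. If $v_1$ and $v_2$ are Borel probability measures on $\mathbb{R}$ with finite second moments that both minimize the functional $v \mapsto \sum_{i=1}^n \lambda_i W_2^2(v, u_i)$ over all Borel probability measures with finite second moment, then $v_1 = v_2$; i.e., the Wasserstein barycenter is unique. -/

import Mathlib

open MeasureTheory Set

/-- Cumulative distribution function of a measure on `ℝ`. -/
noncomputable def cdfFn (u : Measure ℝ) (x : ℝ) : ℝ := (u (Iic x)).toReal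

/-- Quantile function (generalized inverse cdf) of a measure on `ℝ`. -/
noncomputable def quantileFn (u : Measure ℝ) (p : ℝ) : ℝ := sInf {x : ℝ | p ≤ cdfFn u x}

/-- The squared `L²`-Wasserstein distance in one dimension, expressed via quantile
functions. -/
noncomputable def W2sq (u v : Measure ℝ) : ℝ :=
  ∫ p in Ioo (0:ℝ) 1, (quantileFn u p - quantileFn v p) ^ 2

lemma cdfFn_eq (u : Measure ℝ) [IsProbabilityMeasure u] : cdfFn u = ProbabilityTheory.cdf u :=
  funext fun x => (ProbabilityTheory.cdf_eq_real u x).symm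

lemma quantile_set_nonempty (u : Measure ℝ) [IsProbabilityMeasure u] {p : ℝ} (hp : p < 1) :
    {x : ℝ | p ≤ cdfFn u x}.Nonempty := by
  rw [show {x : ℝ | p ≤ cdfFn u x} = {x : ℝ | p ≤ ProbabilityTheory.cdf u x} by
    simp [cdfFn_eq]]
  exact ((ProbabilityTheory.tendsto_cdf_atTop u).eventually (eventually_ge_nhds hp)).exists

lemma quantile_set_bddBelow (u : Measure ℝ) [IsProbabilityMeasure u] {p : ℝ} (hp : 0 < p) :
    BddBelow {x : ℝ | p ≤ cdfFn u x} := by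
  obtain ⟨x₀, hx₀⟩ :=
    ((ProbabilityTheory.tendsto_cdf_atBot u).eventually (eventually_lt_nhds hp)).exists
  refine ⟨x₀, fun x hx => ?_⟩
  by_contra h
  push_neg at h
  rw [cdfFn_eq] at hx
  exact absurd hx (not_le.2 (lt_of_le_of_lt (ProbabilityTheory.monotone_cdf u h.le) hx₀))

lemma le_cdf_quantile (u : Measure ℝ) [IsProbabilityMeasure u] {p : ℝ} (hp : p ∈ Ioo (0:ℝ) 1) :
    p ≤ cdfFn u (quantileFn u p) := by
  obtain ⟨s, hanti, htend, hmem⟩ := exists_seq_tendsto_sInf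
    (quantile_set_nonempty u hp.2) (quantile_set_bddBelow u hp.1)
  have hq : ∀ n, quantileFn u p ≤ s n := fun n =>
    csInf_le (quantile_set_bddBelow u hp.1) (hmem n)
  have hrc := (ProbabilityTheory.cdf u).right_continuous (quantileFn u p)
  have htend' : Filter.Tendsto s Filter.atTop (nhdsWithin (quantileFn u p) (Ici (quantileFn u p))) :=
    tendsto_nhdsWithin_of_tendsto_nhds_of_eventually_within _ htend
      (Filter.Eventually.of_forall fun n => hq n)
  have := le_of_tendsto_of_tendsto tendsto_const_nhds (hrc.tendsto.comp htend')
    (Filter.Eventually.of_forall fun n => by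
      have := hmem n
      rw [cdfFn_eq] at this
      exact this)
  rw [cdfFn_eq]
  exact this

lemma quantile_le_iff (u : Measure ℝ) [IsProbabilityMeasure u] {p : ℝ} (hp : p ∈ Ioo (0:ℝ) 1)
    (x : ℝ) : quantileFn u p ≤ x ↔ p ≤ cdfFn u x := by
  constructor
  · intro h
    refine le_trans (le_cdf_quantile u hp) ?_
    rw [cdfFn_eq]
    exact ProbabilityTheory.monotone_cdf u h
  · intro h
    exact csInf_le (quantile_set_bddBelow u hp.1) h

lemma quantile_monotoneOn (u : Measure ℝ) [IsProbabilityMeasure u] :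
    MonotoneOn (quantileFn u) (Ioo (0:ℝ) 1) := by
  intro p hp p' hp' hle
  rw [quantile_le_iff u hp]
  exact le_trans hle (le_cdf_quantile u hp')

lemma quantile_aemeasurable (u : Measure ℝ) [IsProbabilityMeasure u] :
    AEMeasurable (quantileFn u) (volume.restrict (Ioo (0:ℝ) 1)) :=
  aemeasurable_restrict_of_monotoneOn measurableSet_Ioo (quantile_monotoneOn u)

lemma map_quantile (u : Measure ℝ) [IsProbabilityMeasure u] :
    Measure.map (quantileFn u) (volume.restrict (Ioo (0:ℝ) 1)) = u := by
  haveI : IsProbabilityMeasure (volume.restrict (Ioo (0:ℝ) 1)) :=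
    ⟨by simp [Real.volume_Ioo]⟩
  haveI : IsProbabilityMeasure (Measure.map (quantileFn u) (volume.restrict (Ioo (0:ℝ) 1))) :=
    Measure.isProbabilityMeasure_map (quantile_aemeasurable u)
  refine Measure.ext_of_Iic _ _ (fun x => ?_)
  rw [Measure.map_apply_of_aemeasurable (quantile_aemeasurable u) measurableSet_Iic,
    Measure.restrict_apply' measurableSet_Ioo]
  have hset : quantileFn u ⁻¹' Iic x ∩ Ioo (0:ℝ) 1 = Iic (cdfFn u x) ∩ Ioo (0:ℝ) 1 := by
    ext p
    simp only [mem_inter_iff, mem_preimage, mem_Iic, and_congr_left_iff]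
    intro hp
    exact quantile_le_iff u hp x
  rw [hset]
  have hc0 : 0 ≤ cdfFn u x := ENNReal.toReal_nonneg
  have hc1 : cdfFn u x ≤ 1 := by
    rw [cdfFn_eq]; exact ProbabilityTheory.cdf_le_one u x
  have h1 : volume (Iic (cdfFn u x) ∩ Ioo (0:ℝ) 1) = ENNReal.ofReal (cdfFn u x) := by
    refine le_antisymm ?_ ?_
    · calc volume (Iic (cdfFn u x) ∩ Ioo (0:ℝ) 1)
          ≤ volume (Ioc (0:ℝ) (cdfFn u x)) := by
            refine measure_mono (fun p hp => ?_)
            exact ⟨hp.2.1, hp.1⟩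
        _ = ENNReal.ofReal (cdfFn u x) := by rw [Real.volume_Ioc, sub_zero]
    · calc ENNReal.ofReal (cdfFn u x) = volume (Ioo (0:ℝ) (cdfFn u x)) := by
            rw [Real.volume_Ioo, sub_zero]
        _ ≤ volume (Iic (cdfFn u x) ∩ Ioo (0:ℝ) 1) := by
            refine measure_mono (fun p hp => ?_)
            exact ⟨hp.2.le, hp.1, lt_of_lt_of_le hp.2 hc1⟩
  rw [h1, cdfFn_eq]
  exact ProbabilityTheory.ofReal_cdf u x

lemma quantile_leftCont (u : Measure ℝ) [IsProbabilityMeasure u] {q : ℝ} (hq : q ∈ Ioo (0:ℝ) 1)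
    {x : ℝ} (hx : x < quantileFn u q) :
    ∃ q' ∈ Ioo (0:ℝ) 1, q' < q ∧ x < quantileFn u q' := by
  have hcx : cdfFn u x < q := by
    by_contra h
    push_neg at h
    exact absurd ((quantile_le_iff u hq x).2 h) (not_le.2 hx)
  obtain ⟨q', hq'1, hq'2⟩ := exists_between (show max (cdfFn u x) (q/2) < q from
    max_lt hcx (by linarith [hq.1]))
  have hq'pos : 0 < q' := lt_of_lt_of_le (by linarith [hq.1] : (0:ℝ) < q/2)
    (le_trans (le_max_right _ _) hq'1.le)
  have hq'mem : q' ∈ Ioo (0:ℝ) 1 := ⟨hq'pos, lt_trans hq'2 hq.2⟩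
  refine ⟨q', hq'mem, hq'2, ?_⟩
  by_contra h
  push_neg at h
  have := (quantile_le_iff u hq'mem x).1 h
  exact absurd this (not_le.2 (lt_of_le_of_lt (le_max_left _ _) hq'1))

lemma quantile_map (G : ℝ → ℝ) (hmono : MonotoneOn G (Ioo (0:ℝ) 1))
    (hP : ∀ q ∈ Ioo (0:ℝ) 1, ∀ x < G q, ∃ q' ∈ Ioo (0:ℝ) 1, q' < q ∧ x < G q')
    (hmeas : AEMeasurable G (volume.restrict (Ioo (0:ℝ) 1)))
    {q : ℝ} (hq : q ∈ Ioo (0:ℝ) 1) :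
    quantileFn (Measure.map G (volume.restrict (Ioo (0:ℝ) 1))) q = G q := by
  set w := Measure.map G (volume.restrict (Ioo (0:ℝ) 1)) with hw
  have hcdf : ∀ x, cdfFn w x = (volume (G ⁻¹' Iic x ∩ Ioo (0:ℝ) 1)).toReal := by
    intro x
    rw [cdfFn, hw, Measure.map_apply_of_aemeasurable hmeas measurableSet_Iic,
      Measure.restrict_apply' measurableSet_Ioo]
  have hfin : ∀ x, volume (G ⁻¹' Iic x ∩ Ioo (0:ℝ) 1) ≠ ⊤ := by
    intro x
    refine ne_top_of_le_ne_top ?_ (measure_mono inter_subset_right)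
    simp [Real.volume_Ioo]
  -- (i)  q ≤ cdfFn w (G q)
  have hi : q ≤ cdfFn w (G q) := by
    rw [hcdf]
    have hsub : Ioc (0:ℝ) q ⊆ G ⁻¹' Iic (G q) ∩ Ioo (0:ℝ) 1 := by
      intro p hp
      have hpm : p ∈ Ioo (0:ℝ) 1 := ⟨hp.1, lt_of_le_of_lt hp.2 hq.2⟩
      exact ⟨hmono hpm hq hp.2, hpm⟩
    have := measure_mono (μ := (volume : Measure ℝ)) hsub
    rw [Real.volume_Ioc, sub_zero] at this
    calc q = (ENNReal.ofReal q).toReal := by rw [ENNReal.toReal_ofReal hq.1.le]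
      _ ≤ _ := ENNReal.toReal_mono (hfin _) this
  -- (ii) for x < G q, cdfFn w x < q
  have hii : ∀ x < G q, cdfFn w x < q := by
    intro x hx
    obtain ⟨q', hq'mem, hq'lt, hxq'⟩ := hP q hq x hx
    rw [hcdf]
    have hsub : G ⁻¹' Iic x ∩ Ioo (0:ℝ) 1 ⊆ Ioc (0:ℝ) q' := by
      intro p hp
      refine ⟨hp.2.1, ?_⟩
      by_contra h
      push_neg at h
      exact absurd (le_trans (hmono hq'mem hp.2 h.le) hp.1) (not_le.2 hxq')
    have := measure_mono (μ := (volume : Measure ℝ)) hsub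
    rw [Real.volume_Ioc, sub_zero] at this
    calc (volume (G ⁻¹' Iic x ∩ Ioo (0:ℝ) 1)).toReal
        ≤ (ENNReal.ofReal q').toReal := ENNReal.toReal_mono ENNReal.ofReal_ne_top this
      _ = q' := ENNReal.toReal_ofReal hq'mem.1.le
      _ < q := hq'lt
  have hlb : ∀ x ∈ {x : ℝ | q ≤ cdfFn w x}, G q ≤ x := by
    intro x hx
    by_contra h
    push_neg at h
    exact absurd hx (not_le.2 (hii x h))
  refine le_antisymm (csInf_le ⟨G q, hlb⟩ hi) (le_csInf ⟨G q, hi⟩ hlb)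

lemma quantile_sq_integrable (u : Measure ℝ) [IsProbabilityMeasure u]
    (hmom : Integrable (fun x => x ^ 2) u) :
    Integrable (fun p => quantileFn u p ^ 2) (volume.restrict (Ioo (0:ℝ) 1)) := by
  have h2 : Integrable (fun x => x ^ 2)
      (Measure.map (quantileFn u) (volume.restrict (Ioo (0:ℝ) 1))) := by
    rw [map_quantile u]; exact hmom
  exact h2.comp_aemeasurable (quantile_aemeasurable u)

/-- Uniqueness of the Wasserstein barycenter: if two probability measures with finite
second moments both minimize `v ↦ ∑ᵢ λᵢ W₂²(v, uᵢ)` over all probability measures with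
finite second moment, then they coincide. -/
theorem barycenter_unique
    (n : ℕ) (hn : 1 ≤ n)
    (u : Fin n → Measure ℝ) (hprob : ∀ i, IsProbabilityMeasure (u i))
    (hmom : ∀ i, Integrable (fun x => x ^ 2) (u i))
    (l : Fin n → ℝ) (hl : ∀ i, l i ∈ Icc (0:ℝ) 1) (hsum : ∑ i, l i = 1)
    (v₁ v₂ : Measure ℝ)
    (hv₁prob : IsProbabilityMeasure v₁) (hv₁mom : Integrable (fun x => x ^ 2) v₁)
    (hv₂prob : IsProbabilityMeasure v₂) (hv₂mom : Integrable (fun x => x ^ 2) v₂)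
    (hv₁ : ∀ v : Measure ℝ, IsProbabilityMeasure v → Integrable (fun x => x ^ 2) v →
      ∑ i, l i * W2sq v₁ (u i) ≤ ∑ i, l i * W2sq v (u i))
    (hv₂ : ∀ v : Measure ℝ, IsProbabilityMeasure v → Integrable (fun x => x ^ 2) v →
      ∑ i, l i * W2sq v₂ (u i) ≤ ∑ i, l i * W2sq v (u i)) :
    v₁ = v₂ := by
  haveI hIoo : IsProbabilityMeasure (volume.restrict (Ioo (0:ℝ) 1)) :=
    ⟨by simp [Real.volume_Ioo]⟩
  -- quantile functions
  have haM : AEMeasurable (quantileFn v₁) (volume.restrict (Ioo (0:ℝ) 1)) :=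
    quantile_aemeasurable v₁
  have hbM : AEMeasurable (quantileFn v₂) (volume.restrict (Ioo (0:ℝ) 1)) :=
    quantile_aemeasurable v₂
  have ha2 : MemLp (quantileFn v₁) 2 (volume.restrict (Ioo (0:ℝ) 1)) :=
    (memLp_two_iff_integrable_sq haM.aestronglyMeasurable).2
      (quantile_sq_integrable v₁ hv₁mom)
  have hb2 : MemLp (quantileFn v₂) 2 (volume.restrict (Ioo (0:ℝ) 1)) :=
    (memLp_two_iff_integrable_sq hbM.aestronglyMeasurable).2
      (quantile_sq_integrable v₂ hv₂mom)
  have hqi2 : ∀ i, MemLp (quantileFn (u i)) 2 (volume.restrict (Ioo (0:ℝ) 1)) := fun i =>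
    haveI := hprob i
    (memLp_two_iff_integrable_sq (quantile_aemeasurable (u i)).aestronglyMeasurable).2
      (quantile_sq_integrable (u i) (hmom i))
  -- the midpoint function
  set m : ℝ → ℝ := fun p => (quantileFn v₁ p + quantileFn v₂ p) / 2 with hm
  have hmM : AEMeasurable m (volume.restrict (Ioo (0:ℝ) 1)) := (haM.add hbM).div_const 2
  have hm_mono : MonotoneOn m (Ioo (0:ℝ) 1) := by
    intro p hp p' hp' hle
    have h1 := quantile_monotoneOn v₁ hp hp' hle
    have h2 := quantile_monotoneOn v₂ hp hp' hle
    simp only [hm]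
    linarith
  have hm_P : ∀ q ∈ Ioo (0:ℝ) 1, ∀ x < m q, ∃ q' ∈ Ioo (0:ℝ) 1, q' < q ∧ x < m q' := by
    intro q hq x hx
    simp only [hm] at hx
    obtain ⟨ε, hεpos, hxe⟩ : ∃ ε : ℝ, 0 < ε ∧
        x = (quantileFn v₁ q + quantileFn v₂ q) / 2 - ε :=
      ⟨(quantileFn v₁ q + quantileFn v₂ q) / 2 - x, by linarith, by ring⟩
    obtain ⟨q₁, hq₁mem, hq₁lt, h₁⟩ := quantile_leftCont v₁ hq
      (show quantileFn v₁ q - ε < quantileFn v₁ q by linarith)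
    obtain ⟨q₂, hq₂mem, hq₂lt, h₂⟩ := quantile_leftCont v₂ hq
      (show quantileFn v₂ q - ε < quantileFn v₂ q by linarith)
    have hmaxmem : max q₁ q₂ ∈ Ioo (0:ℝ) 1 :=
      ⟨lt_max_of_lt_left hq₁mem.1, max_lt hq₁mem.2 hq₂mem.2⟩
    refine ⟨max q₁ q₂, hmaxmem, max_lt hq₁lt hq₂lt, ?_⟩
    have hA : quantileFn v₁ q₁ ≤ quantileFn v₁ (max q₁ q₂) :=
      quantile_monotoneOn v₁ hq₁mem hmaxmem (le_max_left _ _)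
    have hB : quantileFn v₂ q₂ ≤ quantileFn v₂ (max q₁ q₂) :=
      quantile_monotoneOn v₂ hq₂mem hmaxmem (le_max_right _ _)
    show x < (quantileFn v₁ (max q₁ q₂) + quantileFn v₂ (max q₁ q₂)) / 2
    linarith
  -- the midpoint measure
  set w : Measure ℝ := Measure.map m (volume.restrict (Ioo (0:ℝ) 1)) with hw
  haveI hwprob : IsProbabilityMeasure w := Measure.isProbabilityMeasure_map hmM
  have hmsq : Integrable (fun p => m p ^ 2) (volume.restrict (Ioo (0:ℝ) 1)) := by
    refine Integrable.mono'
      (((quantile_sq_integrable v₁ hv₁mom).add (quantile_sq_integrable v₂ hv₂mom)).div_const 2)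
      (hmM.pow_const 2).aestronglyMeasurable (Filter.Eventually.of_forall fun p => ?_)
    have : ‖m p ^ 2‖ = m p ^ 2 := by
      rw [Real.norm_eq_abs, abs_of_nonneg (sq_nonneg _)]
    rw [this]
    simp only [hm, Pi.add_apply]
    nlinarith [sq_nonneg (quantileFn v₁ p - quantileFn v₂ p)]
  have hwmom : Integrable (fun x => x ^ 2) w := by
    rw [hw, integrable_map_measure (measurable_id'.pow_const 2).aestronglyMeasurable hmM]
    exact hmsq
  have hqw : ∀ p ∈ Ioo (0:ℝ) 1, quantileFn w p = m p := fun p hp =>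
    quantile_map m hm_mono hm_P hmM hp
  -- integrabilities of squared differences
  have hInt : ∀ f g : ℝ → ℝ, MemLp f 2 (volume.restrict (Ioo (0:ℝ) 1)) →
      MemLp g 2 (volume.restrict (Ioo (0:ℝ) 1)) →
      Integrable (fun p => (f p - g p) ^ 2) (volume.restrict (Ioo (0:ℝ) 1)) := fun f g hf hg =>
    (hf.sub hg).integrable_sq
  have hD : Integrable (fun p => (quantileFn v₁ p - quantileFn v₂ p) ^ 2)
      (volume.restrict (Ioo (0:ℝ) 1)) := hInt _ _ ha2 hb2
  have hA : ∀ i, Integrable (fun p => (quantileFn v₁ p - quantileFn (u i) p) ^ 2)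
      (volume.restrict (Ioo (0:ℝ) 1)) := fun i => hInt _ _ ha2 (hqi2 i)
  have hB : ∀ i, Integrable (fun p => (quantileFn v₂ p - quantileFn (u i) p) ^ 2)
      (volume.restrict (Ioo (0:ℝ) 1)) := fun i => hInt _ _ hb2 (hqi2 i)
  set D : ℝ := ∫ p in Ioo (0:ℝ) 1, (quantileFn v₁ p - quantileFn v₂ p) ^ 2 with hDdef
  -- key identity for W2sq of the midpoint measure
  have hWw : ∀ i, W2sq w (u i) =
      (1/2) * W2sq v₁ (u i) + (1/2) * W2sq v₂ (u i) - (1/4) * D := by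
    intro i
    have h1 : W2sq w (u i) = ∫ p in Ioo (0:ℝ) 1,
        ((1/2) * (quantileFn v₁ p - quantileFn (u i) p) ^ 2
          + (1/2) * (quantileFn v₂ p - quantileFn (u i) p) ^ 2
          - (1/4) * (quantileFn v₁ p - quantileFn v₂ p) ^ 2) := by
      rw [W2sq]
      refine setIntegral_congr_fun measurableSet_Ioo (fun p hp => ?_)
      rw [hqw p hp]
      simp only [hm]
      ring
    have hadd : Integrable (fun p => (1/2) * (quantileFn v₁ p - quantileFn (u i) p) ^ 2
        + (1/2) * (quantileFn v₂ p - quantileFn (u i) p) ^ 2)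
        (volume.restrict (Ioo (0:ℝ) 1)) := ((hA i).const_mul _).add ((hB i).const_mul _)
    rw [h1, integral_sub hadd (hD.const_mul _),
      integral_add ((hA i).const_mul _) ((hB i).const_mul _),
      integral_const_mul, integral_const_mul, integral_const_mul]
    rfl
  -- sum identity
  have hsum_w : ∑ i, l i * W2sq w (u i) =
      (1/2) * ∑ i, l i * W2sq v₁ (u i) + (1/2) * ∑ i, l i * W2sq v₂ (u i) - (1/4) * D := by
    have h1 : ∑ i, l i * W2sq w (u i) =
        ∑ i, ((1/2) * (l i * W2sq v₁ (u i)) + (1/2) * (l i * W2sq v₂ (u i))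
          - l i * ((1/4) * D)) :=
      Finset.sum_congr rfl fun i _ => by rw [hWw i]; ring
    rw [h1, Finset.sum_sub_distrib, Finset.sum_add_distrib, ← Finset.mul_sum, ← Finset.mul_sum,
      ← Finset.sum_mul, hsum, one_mul]
  -- conclude D = 0
  have h12 : ∑ i, l i * W2sq v₁ (u i) = ∑ i, l i * W2sq v₂ (u i) :=
    le_antisymm (hv₁ v₂ hv₂prob hv₂mom) (hv₂ v₁ hv₁prob hv₁mom)
  have hle := hv₁ w hwprob hwmom
  rw [hsum_w, ← h12] at hle
  have hDnn : 0 ≤ D := integral_nonneg fun p => sq_nonneg _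
  have hDeq : D = 0 := le_antisymm (by linarith) hDnn
  have hae : (fun p => (quantileFn v₁ p - quantileFn v₂ p) ^ 2)
      =ᵐ[volume.restrict (Ioo (0:ℝ) 1)] 0 :=
    (integral_eq_zero_iff_of_nonneg_ae (Filter.Eventually.of_forall fun p => sq_nonneg _) hD).1
      hDeq
  have hab : quantileFn v₁ =ᵐ[volume.restrict (Ioo (0:ℝ) 1)] quantileFn v₂ := by
    filter_upwards [hae] with p hp
    simp only [Pi.zero_apply] at hp
    have := pow_eq_zero_iff (two_ne_zero) |>.1 hp
    linarith
  calc v₁ = Measure.map (quantileFn v₁) (volume.restrict (Ioo (0:ℝ) 1)) := (map_quantile v₁).symm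
    _ = Measure.map (quantileFn v₂) (volume.restrict (Ioo (0:ℝ) 1)) := Measure.map_congr hab
    _ = v₂ := map_quantile v₂
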